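/- arXiv:1606.04848 — 2 statements merged into one kernel-verified Lean document; each statement's English description precedes it below -/
import Mathlib

section
/- Let a, b, c, d, e, f be six distinct points of ℝ³ such that every 4-element subset of {a, b, c, d, e, f} is affinely independent. If for each edge s of either triangle {a,b,c}, {d,e,f} the relative interior of s is disjoint from the relative interior of the other triangle, then conv{a,b,c} ∩ conv{d,e,f} = ∅. -/
/-!
If the two triangles meet, their intersection is a nonempty compact convex set, so it has an
extreme point `x`. By Carathéodory, `x` lies in the relative interior of a face of each triangle.
If the two faces have at most four vertices together, general position makes their affine spans
disjoint. If both faces are the whole triangles, the two planes share a direction in `ℝ³`, and `x`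
can be moved both ways along it inside the intersection, contradicting extremality. In every other
case an edge of one triangle meets the relative interior of the other at `x`.
-/

/-- The six (edge, other-triangle) pairs associated with the two triangles
`{a,b,c}` and `{d,e,f}` in `ℝ³`: each edge of one triangle paired with the
convex hull of the other triangle. -/
def edgeTrianglePairs (a b c d e f : EuclideanSpace ℝ (Fin 3)) :
    Fin 6 → Set (EuclideanSpace ℝ (Fin 3)) × Set (EuclideanSpace ℝ (Fin 3))
  | 0 => (segment ℝ a b, convexHull ℝ ({d, e, f} : Set (EuclideanSpace ℝ (Fin 3))))
  | 1 => (segment ℝ b c, convexHull ℝ ({d, e, f} : Set (EuclideanSpace ℝ (Fin 3))))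
  | 2 => (segment ℝ a c, convexHull ℝ ({d, e, f} : Set (EuclideanSpace ℝ (Fin 3))))
  | 3 => (segment ℝ d e, convexHull ℝ ({a, b, c} : Set (EuclideanSpace ℝ (Fin 3))))
  | 4 => (segment ℝ e f, convexHull ℝ ({a, b, c} : Set (EuclideanSpace ℝ (Fin 3))))
  | 5 => (segment ℝ d f, convexHull ℝ ({a, b, c} : Set (EuclideanSpace ℝ (Fin 3))))

open Set Topology

theorem affineIndependent_of_card_le {ι k V P : Type*} [Fintype ι] [Ring k] [AddCommGroup V]
    [Module k V] [AddTorsor V P] {p : ι → P} {n : ℕ}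
    (hgen : ∀ s : Finset ι, s.card = n → AffineIndependent k (fun i : s => p i))
    (hn : n ≤ Fintype.card ι) {t : Finset ι} (ht : t.card ≤ n) :
    AffineIndependent k (fun i : t => p i) := by
  obtain ⟨s, hts, hs⟩ := Finset.exists_superset_card_eq ht hn
  exact (hgen s hs).comp_embedding (Set.embeddingOfSubset _ _ hts)

theorem Submodule.inf_ne_bot_of_finrank_lt_add {K W : Type*} [DivisionRing K] [AddCommGroup W]
    [Module K W] [FiniteDimensional K W] {U U' : Submodule K W}
    (h : Module.finrank K W < Module.finrank K U + Module.finrank K U') : U ⊓ U' ≠ ⊥ :=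
  fun hbot => h.not_ge (Submodule.finrank_add_finrank_le_of_disjoint (disjoint_iff.2 hbot))

section

variable {V : Type*} [NormedAddCommGroup V] [NormedSpace ℝ V]

theorem eventually_add_smul_mem_of_mem_intrinsicInterior {s : Set V} {x v : V}
    (hx : x ∈ intrinsicInterior ℝ s) (hv : v ∈ (affineSpan ℝ s).direction) :
    ∀ᶠ τ in 𝓝 (0 : ℝ), x + τ • v ∈ s := by
  obtain ⟨y, hy, rfl⟩ := hx
  let f : ℝ → affineSpan ℝ s := fun τ =>
    ⟨y + τ • v, by
      rw [add_comm]
      exact AffineSubspace.vadd_mem_of_mem_direction (Submodule.smul_mem _ τ hv) y.2⟩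
  have hf : Continuous f := by fun_prop
  have hf0 : f 0 = y := by simp [f]
  filter_upwards [hf.continuousAt.preimage_mem_nhds (hf0 ▸ isOpen_interior.mem_nhds hy)]
    with τ hτ
  exact (interior_subset hτ : f τ ∈ Subtype.val ⁻¹' s)

theorem notMem_extremePoints_inter_of_mem_intrinsicInterior {s t : Set V} {x : V}
    (hs : x ∈ intrinsicInterior ℝ s) (ht : x ∈ intrinsicInterior ℝ t)
    (hdir : (affineSpan ℝ s).direction ⊓ (affineSpan ℝ t).direction ≠ ⊥) :
    x ∉ (s ∩ t).extremePoints ℝ := by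
  obtain ⟨v, hv, hv0⟩ := Submodule.exists_mem_ne_zero_of_ne_bot hdir
  rw [Submodule.mem_inf] at hv
  obtain ⟨ε, hε, hball⟩ := Metric.eventually_nhds_iff.1
    ((eventually_add_smul_mem_of_mem_intrinsicInterior hs hv.1).and
      (eventually_add_smul_mem_of_mem_intrinsicInterior ht hv.2))
  have hmem : ∀ τ : ℝ, |τ| < ε → x + τ • v ∈ s ∩ t := fun τ hτ =>
    hball (by rwa [Real.dist_0_eq_abs])
  intro hx
  have hseg : x ∈ openSegment ℝ (x + (ε / 2) • v) (x + (-(ε / 2)) • v) :=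
    ⟨1 / 2, 1 / 2, by norm_num, by norm_num, by norm_num, by module⟩
  have hfix := hx.2 (hmem _ (by rw [abs_of_pos (by positivity)]; linarith))
    (hmem _ (by rw [abs_neg, abs_of_pos (by positivity)]; linarith)) hseg
  exact hv0 ((smul_eq_zero.1 (add_eq_left.1 hfix)).resolve_left (by positivity))

theorem AffineIndependent.affineCombination_mem_intrinsicInterior_convexHull
    {ι : Type*} [Fintype ι] {p : ι → V} (hp : AffineIndependent ℝ p)
    {w : ι → ℝ} (hw0 : ∀ i, 0 < w i) (hw1 : ∑ i, w i = 1) :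
    Finset.univ.affineCombination ℝ p w ∈ intrinsicInterior ℝ (convexHull ℝ (range p)) := by
  set A := affineSpan ℝ (range p)
  have : Nonempty ι := by
    by_contra h
    simp [not_nonempty_iff.1 h] at hw1
  let b : AffineBasis ι ℝ A :=
    ⟨fun i => ⟨p i, subset_affineSpan _ _ (mem_range_self i)⟩,
      AffineIndependent.of_comp A.subtype hp, by
        convert affineSpan_coe_preimage_eq_top (k := ℝ) (range p)
        ext z
        simp [Subtype.ext_iff]⟩
  have hb : ∀ (u : ι → ℝ), ∑ i, u i = 1 →
      (Finset.univ.affineCombination ℝ b u : V) = Finset.univ.affineCombination ℝ p u :=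
    fun u _ => Finset.map_affineCombination _ _ _ ‹_› A.subtype
  rw [mem_intrinsicInterior, affineSpan_convexHull]
  refine ⟨Finset.univ.affineCombination ℝ b w, ?_, hb w hw1⟩
  rw [mem_interior]
  -- barycentric coordinates are continuous on `A`, so positivity of all of them is open in `A`
  refine ⟨{z | ∀ i, 0 < b.coord i z}, fun z hz => ?_, ?_, fun i => ?_⟩
  · have hz' := congrArg Subtype.val (b.affineCombination_coord_eq_self z)
    rw [hb _ (b.sum_coord_apply_eq_one z)] at hz'
    rw [mem_preimage, ← hz']
    exact affineCombination_mem_convexHull (fun i _ => (hz i).le) (b.sum_coord_apply_eq_one z)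
  · simp only [ofPred_forall]
    exact isOpen_iInter_of_finite fun i =>
      isOpen_lt continuous_const (b.coord i).continuous_of_finiteDimensional
  · rw [b.coord_apply_combination_of_mem (Finset.mem_univ i) hw1]
    exact hw0 i

theorem exists_subset_mem_intrinsicInterior_convexHull {X : Set V} {x : V}
    (hx : x ∈ convexHull ℝ X) : ∃ Y ⊆ X, x ∈ intrinsicInterior ℝ (convexHull ℝ Y) := by
  obtain ⟨κ, _, z, w, hzX, hz, hw0, hw1, rfl⟩ := eq_pos_convex_span_of_mem_convexHull hx
  refine ⟨range z, hzX, ?_⟩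
  have := hz.affineCombination_mem_intrinsicInterior_convexHull hw0 hw1
  rwa [Finset.affineCombination_eq_linear_combination _ _ _ hw1] at this

theorem exists_subset_mem_intrinsicInterior_convexHull_image {ι : Type*} {p : ι → V}
    {I : Finset ι} {x : V} (hx : x ∈ convexHull ℝ (p '' I)) :
    ∃ J ⊆ I, x ∈ intrinsicInterior ℝ (convexHull ℝ (p '' J)) := by
  classical
  obtain ⟨Y, hY, hxY⟩ := exists_subset_mem_intrinsicInterior_convexHull hx
  obtain ⟨K, hKI, rfl⟩ := subset_image_iff.1 hY
  refine ⟨I.filter (· ∈ K), Finset.filter_subset _ _, ?_⟩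
  convert hxY
  ext i
  simpa using fun hi => hKI hi

theorem disjoint_convexHull_image_of_affineIndependent {ι : Type*} [DecidableEq ι] {p : ι → V}
    {I J : Finset ι}
    (h : AffineIndependent ℝ (fun i : (I ∪ J : Finset ι) => p i)) (hIJ : Disjoint I J) :
    Disjoint (convexHull ℝ (p '' I)) (convexHull ℝ (p '' J)) := by
  have himage : ∀ K ⊆ I ∪ J,
      (fun i : (I ∪ J : Finset ι) => p i) '' (Subtype.val ⁻¹' K) = p '' K := fun K hK => by
    rw [show (fun i : (I ∪ J : Finset ι) => p i) = p ∘ Subtype.val from rfl, image_comp,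
      image_preimage_eq_of_subset fun i hi => ⟨⟨i, hK hi⟩, rfl⟩]
  have hspan := h.affineSpan_disjoint_of_disjoint
    ((Finset.disjoint_coe.2 hIJ).preimage Subtype.val)
  rw [himage _ Finset.subset_union_left, himage _ Finset.subset_union_right] at hspan
  exact hspan.mono (convexHull_subset_affineSpan _) (convexHull_subset_affineSpan _)

theorem finrank_direction_affineSpan_convexHull_image {ι : Type*} {p : ι → V} {I : Finset ι}
    (h : AffineIndependent ℝ (fun i : I => p i)) {n : ℕ} (hI : I.card = n + 1) :
    Module.finrank ℝ (affineSpan ℝ (convexHull ℝ (p '' I))).direction = n := by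
  rw [affineSpan_convexHull, direction_affineSpan, image_eq_range]
  exact h.finrank_vectorSpan (by simpa)

theorem exists_edge_mem_intrinsicInterior_of_mem_extremePoints [FiniteDimensional ℝ V]
    (hV : Module.finrank ℝ V ≤ 3) {ι : Type*} [DecidableEq ι] {P : ι → V}
    (hP : ∀ s : Finset ι, s.card ≤ 4 → AffineIndependent ℝ (fun i : s => P i))
    {L R : Finset ι} (hLR : Disjoint L R) (hL : L.card = 3) (hR : R.card = 3) {x : V}
    (hx : x ∈ (convexHull ℝ (P '' L) ∩ convexHull ℝ (P '' R)).extremePoints ℝ) :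
    (∃ J ⊆ L, J.card = 2 ∧ x ∈ intrinsicInterior ℝ (convexHull ℝ (P '' J)) ∧
        x ∈ intrinsicInterior ℝ (convexHull ℝ (P '' R))) ∨
      ∃ K ⊆ R, K.card = 2 ∧ x ∈ intrinsicInterior ℝ (convexHull ℝ (P '' L)) ∧
        x ∈ intrinsicInterior ℝ (convexHull ℝ (P '' K)) := by
  obtain ⟨J, hJ, hxJ⟩ := exists_subset_mem_intrinsicInterior_convexHull_image hx.1.1
  obtain ⟨K, hK, hxK⟩ := exists_subset_mem_intrinsicInterior_convexHull_image hx.1.2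
  have hcard : 5 ≤ J.card + K.card := by
    by_contra! h
    exact disjoint_left.1 (disjoint_convexHull_image_of_affineIndependent
      (hP _ ((Finset.card_union_le _ _).trans (by omega)))
      (Finset.disjoint_of_subset_left hJ (Finset.disjoint_of_subset_right hK hLR)))
      (intrinsicInterior_subset hxJ) (intrinsicInterior_subset hxK)
  have hJL := Finset.card_le_card hJ
  have hKR := Finset.card_le_card hK
  obtain hJ2 | hJ3 : J.card = 2 ∨ J.card = 3 := by omega
  · obtain rfl := Finset.eq_of_subset_of_card_le hK (by omega)
    exact Or.inl ⟨J, hJ, hJ2, hxJ, hxK⟩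
  obtain rfl := Finset.eq_of_subset_of_card_le hJ (by omega)
  obtain hK2 | hK3 : K.card = 2 ∨ K.card = 3 := by omega
  · exact Or.inr ⟨K, hK, hK2, hxJ, hxK⟩
  obtain rfl := Finset.eq_of_subset_of_card_le hK (by omega)
  refine absurd hx (notMem_extremePoints_inter_of_mem_intrinsicInterior hxJ hxK ?_)
  apply Submodule.inf_ne_bot_of_finrank_lt_add
  rw [finrank_direction_affineSpan_convexHull_image (hP _ (by omega)) hJ3,
    finrank_direction_affineSpan_convexHull_image (hP _ (by omega)) hK3]
  omega

end

theorem exists_edgeTrianglePairs_eq_of_subset_left (a b c d e f : EuclideanSpace ℝ (Fin 3))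
    {J : Finset (Fin 6)} (hJ : J ⊆ {0, 1, 2}) (hJ2 : J.card = 2) :
    ∃ i, edgeTrianglePairs a b c d e f i = (convexHull ℝ (![a, b, c, d, e, f] '' J),
      convexHull ℝ (![a, b, c, d, e, f] '' ({3, 4, 5} : Finset (Fin 6)))) := by
  rcases (by decide : ∀ J ∈ ({0, 1, 2} : Finset (Fin 6)).powerset, J.card = 2 →
    J = {0, 1} ∨ J = {1, 2} ∨ J = {0, 2}) J (Finset.mem_powerset.2 hJ) hJ2 with rfl | rfl | rfl
  · exact ⟨0, by simp [edgeTrianglePairs, image_insert_eq, convexHull_pair]⟩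
  · exact ⟨1, by simp [edgeTrianglePairs, image_insert_eq, convexHull_pair]⟩
  · exact ⟨2, by simp [edgeTrianglePairs, image_insert_eq, convexHull_pair]⟩

theorem exists_edgeTrianglePairs_eq_of_subset_right (a b c d e f : EuclideanSpace ℝ (Fin 3))
    {K : Finset (Fin 6)} (hK : K ⊆ {3, 4, 5}) (hK2 : K.card = 2) :
    ∃ i, edgeTrianglePairs a b c d e f i = (convexHull ℝ (![a, b, c, d, e, f] '' K),
      convexHull ℝ (![a, b, c, d, e, f] '' ({0, 1, 2} : Finset (Fin 6)))) := by
  rcases (by decide : ∀ K ∈ ({3, 4, 5} : Finset (Fin 6)).powerset, K.card = 2 →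
    K = {3, 4} ∨ K = {4, 5} ∨ K = {3, 5}) K (Finset.mem_powerset.2 hK) hK2 with rfl | rfl | rfl
  · exact ⟨3, by simp [edgeTrianglePairs, image_insert_eq, convexHull_pair]⟩
  · exact ⟨4, by simp [edgeTrianglePairs, image_insert_eq, convexHull_pair]⟩
  · exact ⟨5, by simp [edgeTrianglePairs, image_insert_eq, convexHull_pair]⟩

theorem two_triangles_disjoint_of_no_piercing_edge_general
    (a b c d e f : EuclideanSpace ℝ (Fin 3))
    (hgen : ∀ s : Finset (Fin 6), s.card = 4 →
      AffineIndependent ℝ (fun i : s => (![a, b, c, d, e, f] : Fin 6 → _) i.1))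
    (hdisj : ∀ i : Fin 6,
      intrinsicInterior ℝ (edgeTrianglePairs a b c d e f i).1 ∩
        intrinsicInterior ℝ (edgeTrianglePairs a b c d e f i).2 = ∅) :
    convexHull ℝ ({a, b, c} : Set (EuclideanSpace ℝ (Fin 3))) ∩
      convexHull ℝ ({d, e, f} : Set (EuclideanSpace ℝ (Fin 3))) = ∅ := by
  set P : Fin 6 → EuclideanSpace ℝ (Fin 3) := ![a, b, c, d, e, f]
  have hL : ({a, b, c} : Set _) = P '' ({0, 1, 2} : Finset (Fin 6)) := by
    simp [P, image_insert_eq]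
  have hR : ({d, e, f} : Set _) = P '' ({3, 4, 5} : Finset (Fin 6)) := by
    simp [P, image_insert_eq]
  rw [hL, hR, ← not_nonempty_iff_eq_empty]
  intro hne
  obtain ⟨x, hx⟩ := (((toFinite _).isCompact_convexHull (𝕜 := ℝ)).inter_right
    ((toFinite _).isCompact_convexHull (𝕜 := ℝ)).isClosed).extremePoints_nonempty hne
  rcases exists_edge_mem_intrinsicInterior_of_mem_extremePoints (by simp)
      (fun s hs => affineIndependent_of_card_le hgen (by simp) hs) (by decide) rfl rfl hx with
    ⟨J, hJ, hJ2, hxJ, hxR⟩ | ⟨K, hK, hK2, hxL, hxK⟩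
  · obtain ⟨i, hi⟩ := exists_edgeTrianglePairs_eq_of_subset_left a b c d e f hJ hJ2
    have h := hdisj i
    rw [hi] at h
    exact h.subset ⟨hxJ, hxR⟩
  · obtain ⟨i, hi⟩ := exists_edgeTrianglePairs_eq_of_subset_right a b c d e f hK hK2
    have h := hdisj i
    rw [hi] at h
    exact h.subset ⟨hxK, hxL⟩

/-- If, for two vertex-disjoint triangles in general position in
`ℝ³` (six distinct points, no four coplanar), the relative interior of every edge of
either triangle is disjoint from the relative interior of the other triangle, then
the two (closed) triangles are disjoint. -/
theorem two_triangles_disjoint_of_no_piercing_edge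
    (a b c d e f : EuclideanSpace ℝ (Fin 3))
    (hinj : Function.Injective ![a, b, c, d, e, f])
    (hgen : ∀ s : Finset (Fin 6), s.card = 4 →
      AffineIndependent ℝ (fun i : s => (![a, b, c, d, e, f] : Fin 6 → _) i.1))
    (hdisj : ∀ i : Fin 6,
      intrinsicInterior ℝ (edgeTrianglePairs a b c d e f i).1 ∩
        intrinsicInterior ℝ (edgeTrianglePairs a b c d e f i).2 = ∅) :
    convexHull ℝ ({a, b, c} : Set (EuclideanSpace ℝ (Fin 3))) ∩
      convexHull ℝ ({d, e, f} : Set (EuclideanSpace ℝ (Fin 3))) = ∅ :=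
  two_triangles_disjoint_of_no_piercing_edge_general a b c d e f hgen hdisj
end

section
/- Let Δ be a combinatorial triangulation of a closed surface on vertex set V, and let ψ : V → ℝ³ be a polyhedral immersion of Δ. Let {a,b} be an edge of Δ and {d,e,f} a triangle of Δ. If {a,b} ∩ {d,e,f} ≠ ∅, or if at least one of the sets {a,b,d}, {a,b,e}, {a,b,f} is a triangle of Δ, then the segment conv{ψ(a), ψ(b)} does not meet the relative interior of the triangle conv{ψ(d), ψ(e), ψ(f)}. -/
/-!
Suppose the segment met the relative interior of `conv ψ{d,e,f}` at `p`. Some triangle `T ⊇ {a,b}`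
meets `{d,e,f}`, so by the immersion axiom `p` lies in the image of the face `T ∩ {d,e,f}`; this face
is proper unless `T = {d,e,f}`, and then `p` lies in the image of the proper face `{a,b}`.
A proper face of a nondegenerate triangle misses its relative interior: the barycentric coordinate
of a vertex outside the face is nonnegative on the triangle and vanishes on the face, while an
affine function that is nonnegative on a set and vanishes at a relative interior point vanishes on
the whole set (move slightly past that point, away from any other point of the set).
-/

open Finset

/-- The set of edges of a family `Δ` of triangles on vertex set `V`:
all 2-element subsets of `V` contained in some triangle of `Δ`. -/
def triEdges {V : Type*} [Fintype V] [DecidableEq V] (Δ : Finset (Finset V)) :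
    Finset (Finset V) :=
  (Finset.univ.powersetCard 2).filter (fun e => ∃ T ∈ Δ, e ⊆ T)

/-- The vertices of the link of `v`: those `u` with `{v, u}` an edge. -/
def linkVerts {V : Type*} [Fintype V] [DecidableEq V] (Δ : Finset (Finset V)) (v : V) :
    Finset V :=
  Finset.univ.filter (fun u => ({v, u} : Finset V) ∈ triEdges Δ)

/-- The link graph of a vertex `v`: vertices are the `u` with `{v,u}` an edge,
and `u`, `w` are adjacent iff `{v,u,w}` is a triangle of `Δ`. -/
def linkGraph {V : Type*} [Fintype V] [DecidableEq V] (Δ : Finset (Finset V)) (v : V) :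
    SimpleGraph {u : V // u ∈ linkVerts Δ v} where
  Adj u w := u ≠ w ∧ ({v, u.1, w.1} : Finset V) ∈ Δ
  symm := by
    constructor
    rintro u w ⟨h1, h2⟩
    refine ⟨h1.symm, ?_⟩
    rwa [Finset.pair_comm w.1 u.1]
  loopless := by constructor; rintro u ⟨h, _⟩; exact h rfl

/-- The edge graph of `Δ` on the vertex set `V`. -/
def edgeGraph {V : Type*} [Fintype V] [DecidableEq V] (Δ : Finset (Finset V)) :
    SimpleGraph V where
  Adj a b := a ≠ b ∧ ({a, b} : Finset V) ∈ triEdges Δ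
  symm := by
    constructor
    rintro a b ⟨h1, h2⟩
    refine ⟨h1.symm, ?_⟩
    rwa [Finset.pair_comm b a]
  loopless := by constructor; rintro a ⟨h, _⟩; exact h rfl

/-- A combinatorial triangulation of a closed surface on the (finite) vertex set `V`. -/
structure IsTriangulation {V : Type*} [Fintype V] [DecidableEq V]
    (Δ : Finset (Finset V)) : Prop where
  /-- every element of `Δ` is a triangle, i.e. has exactly 3 vertices -/
  card3 : ∀ T ∈ Δ, T.card = 3
  /-- every vertex belongs to some triangle -/
  cover : ∀ v : V, ∃ T ∈ Δ, v ∈ T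
  /-- every 2-element subset of a triangle is contained in exactly two triangles -/
  edgeTwo : ∀ T ∈ Δ, ∀ e ⊆ T, e.card = 2 → (Δ.filter (fun T' => e ⊆ T')).card = 2
  /-- the link graph of every vertex is connected -/
  linkConn : ∀ v : V, (linkGraph Δ v).Connected
  /-- the link graph of every vertex is 2-regular -/
  linkReg : ∀ v : V, ∀ u ∈ linkVerts Δ v,
    ((linkVerts Δ v).filter (fun w => w ≠ u ∧ ({v, u, w} : Finset V) ∈ Δ)).card = 2
  /-- the edge graph is connected -/
  edgeConn : (edgeGraph Δ).Connected

/-- A polyhedral immersion of a triangulation `Δ` into `ℝ³`, given by a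
coordinatization `ψ` of the vertices: (i) the images of the vertices of every
triangle are affinely independent, and (ii) any two triangles sharing a vertex
or an edge intersect, after realization, exactly in the realization of their
common face. -/
def IsPolyhedralImmersion {V : Type*} [Fintype V] [DecidableEq V]
    (Δ : Finset (Finset V)) (ψ : V → EuclideanSpace ℝ (Fin 3)) : Prop :=
  (∀ T ∈ Δ, ∀ u v w : V, T = {u, v, w} → AffineIndependent ℝ ![ψ u, ψ v, ψ w]) ∧
  (∀ T ∈ Δ, ∀ T' ∈ Δ, (T ∩ T').Nonempty →
    convexHull ℝ (ψ '' (T : Set V)) ∩ convexHull ℝ (ψ '' (T' : Set V)) =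
      convexHull ℝ (ψ '' ((T ∩ T' : Finset V) : Set V)))

open Set AffineMap Topology Filter

lemma AffineIndependent.exists_affineMap_eq_one_eq_zero {k V P ι : Type*} [DivisionRing k]
    [AddCommGroup V] [Module k V] [AddTorsor V P] {p : ι → P} (hp : AffineIndependent k p)
    (i : ι) : ∃ g : P →ᵃ[k] k, g (p i) = 1 ∧ ∀ j ≠ i, g (p j) = 0 := by
  obtain ⟨t, hpt, ht, hspan⟩ := exists_subset_affineIndependent_affineSpan_eq_top hp.range
  let b : AffineBasis t k P := ⟨(↑), ht, by rwa [Subtype.range_coe]⟩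
  have hmem (j : ι) : p j ∈ t := hpt (mem_range_self j)
  refine ⟨b.coord ⟨p i, hmem i⟩, b.coord_apply_eq _, fun j hj => ?_⟩
  exact b.coord_apply_ne (i := ⟨p i, hmem i⟩) (j := ⟨p j, hmem j⟩)
    fun h => hj (hp.injective (congrArg Subtype.val h).symm)

section Geometry

variable {E : Type*} [AddCommGroup E] [Module ℝ E] [TopologicalSpace E]
  [IsTopologicalAddGroup E] [ContinuousSMul ℝ E]

lemma exists_lineMap_mem_of_mem_intrinsicInterior {C : Set E} {x z : E}
    (hx : x ∈ intrinsicInterior ℝ C) (hz : z ∈ C) : ∃ t : ℝ, 1 < t ∧ lineMap z x t ∈ C := by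
  obtain ⟨y, hy, rfl⟩ := mem_intrinsicInterior.1 hx
  let γ : ℝ → affineSpan ℝ C := fun t =>
    ⟨lineMap z y t, AffineMap.lineMap_mem _ (subset_affineSpan ℝ C hz) y.2⟩
  have hγ : Continuous γ := lineMap_continuous.subtype_mk _
  have hγ1 : γ 1 = y := Subtype.ext (lineMap_apply_one _ _)
  have hnear : ∀ᶠ t in 𝓝 (1 : ℝ), γ t ∈ interior ((↑) ⁻¹' C) :=
    hγ.continuousAt.preimage_mem_nhds (hγ1 ▸ isOpen_interior.mem_nhds hy)
  obtain ⟨t, ht, ht1⟩ := ((hnear.filter_mono nhdsWithin_le_nhds).and self_mem_nhdsWithin).exists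
    (f := 𝓝[>] (1 : ℝ))
  exact ⟨t, ht1, interior_subset (s := ((↑) : affineSpan ℝ C → E) ⁻¹' C) ht⟩

lemma AffineMap.eq_zero_of_nonneg_of_mem_intrinsicInterior {C : Set E} (g : E →ᵃ[ℝ] ℝ)
    (hg : ∀ y ∈ C, 0 ≤ g y) {x z : E} (hx : x ∈ intrinsicInterior ℝ C) (hgx : g x = 0)
    (hz : z ∈ C) : g z = 0 := by
  obtain ⟨t, ht, htC⟩ := exists_lineMap_mem_of_mem_intrinsicInterior hx hz
  have h : 0 ≤ (1 - t) * g z := by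
    have := hg _ htC
    rwa [g.apply_lineMap, hgx, lineMap_apply_module, smul_zero, add_zero, smul_eq_mul] at this
  exact le_antisymm (nonpos_of_mul_nonneg_right h (by linarith)) (hg z hz)

lemma AffineIndependent.disjoint_convexHull_image_intrinsicInterior {ι : Type*} {p : ι → E}
    (hp : AffineIndependent ℝ p) {s : Set ι} {i : ι} (hi : i ∉ s) :
    Disjoint (convexHull ℝ (p '' s)) (intrinsicInterior ℝ (convexHull ℝ (range p))) := by
  obtain ⟨g, hgi, hg⟩ := hp.exists_affineMap_eq_one_eq_zero i
  have hg_nonneg : convexHull ℝ (range p) ⊆ g ⁻¹' Ici 0 := by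
    refine convexHull_min ?_ ((convex_Ici 0).affine_preimage g)
    rintro _ ⟨j, rfl⟩
    obtain rfl | hj := eq_or_ne j i
    · simp [hgi]
    · simp [hg j hj]
  have hg_face : convexHull ℝ (p '' s) ⊆ g ⁻¹' {0} := by
    refine convexHull_min ?_ ((convex_singleton 0).affine_preimage g)
    rintro _ ⟨j, hj, rfl⟩
    exact hg j (ne_of_mem_of_not_mem hj hi)
  refine Set.disjoint_left.2 fun x hxs hxi => one_ne_zero (α := ℝ) ?_
  rw [← hgi]
  exact g.eq_zero_of_nonneg_of_mem_intrinsicInterior (fun y hy => hg_nonneg hy) hxi (hg_face hxs)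
    (subset_convexHull ℝ _ (mem_range_self i))

end Geometry

lemma Finset.inter_ssubset_or_ssubset_of_card {α : Type*} [DecidableEq α] {s t u : Finset α}
    (hst : s ⊆ t) (hs : #s < #u) (ht : #t ≤ #u) : t ∩ u ⊂ u ∨ s ⊂ u := by
  by_cases hut : u ⊆ t
  · obtain rfl := eq_of_subset_of_card_le hut ht
    exact .inr (ssubset_iff_subset_ne.2 ⟨hst, by rintro rfl; exact hs.false⟩)
  · exact .inl (ssubset_iff_subset_ne.2 ⟨inter_subset_right, mt inter_eq_right.1 hut⟩)

section Triangulation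

variable {V : Type*} [Fintype V] [DecidableEq V] {Δ : Finset (Finset V)}

lemma mem_triEdges {s : Finset V} : s ∈ triEdges Δ ↔ #s = 2 ∧ ∃ T ∈ Δ, s ⊆ T := by
  simp [triEdges]

lemma exists_triangle_superset_edge_inter_nonempty {a b d e f : V}
    (hedge : ({a, b} : Finset V) ∈ triEdges Δ)
    (hcond : (({a, b} : Finset V) ∩ {d, e, f}).Nonempty ∨
      ({a, b, d} : Finset V) ∈ Δ ∨ ({a, b, e} : Finset V) ∈ Δ ∨ ({a, b, f} : Finset V) ∈ Δ) :
    ∃ T ∈ Δ, ({a, b} : Finset V) ⊆ T ∧ (T ∩ {d, e, f}).Nonempty := by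
  rcases hcond with hmeet | h | h | h
  · obtain ⟨-, T, hT, habT⟩ := mem_triEdges.1 hedge
    exact ⟨T, hT, habT, hmeet.mono (inter_subset_inter_right habT)⟩
  · exact ⟨_, h, by simp, d, by simp⟩
  · exact ⟨_, h, by simp, e, by simp⟩
  · exact ⟨_, h, by simp, f, by simp⟩

lemma IsPolyhedralImmersion.disjoint_convexHull_image_intrinsicInterior
    {ψ : V → EuclideanSpace ℝ (Fin 3)} (hψ : IsPolyhedralImmersion Δ ψ) {d e f : V}
    (htri : ({d, e, f} : Finset V) ∈ Δ) {S : Finset V} (hS : S ⊂ {d, e, f}) :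
    Disjoint (convexHull ℝ (ψ '' S)) (intrinsicInterior ℝ (convexHull ℝ {ψ d, ψ e, ψ f})) := by
  let q : Fin 3 → V := ![d, e, f]
  have hq : ![ψ d, ψ e, ψ f] = ψ ∘ q := by
    funext i; fin_cases i <;> rfl
  have hrange : range q = ({d, e, f} : Finset V) := by
    ext x; simp [q, eq_comm, or_comm, or_left_comm]
  obtain ⟨v, hvT, hvS⟩ := Finset.exists_of_ssubset hS
  obtain ⟨i, rfl⟩ : v ∈ range q := hrange ▸ hvT
  have h := (hψ.1 _ htri d e f rfl).disjoint_convexHull_image_intrinsicInterior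
    (s := q ⁻¹' S) (i := i) hvS
  rw [hq, Set.image_comp, image_preimage_eq_of_subset (hrange ▸ coe_subset.2 hS.subset),
    range_comp, hrange] at h
  simpa [image_insert_eq] using h

end Triangulation

/-- **edge-cut analysis.** In a polyhedral immersion of a combinatorial
triangulation, if an edge `{a,b}` shares a vertex with a triangle `{d,e,f}`, or if one
of `{a,b,d}`, `{a,b,e}`, `{a,b,f}` is a triangle of `Δ`, then the segment from `ψ a`
to `ψ b` does not meet the relative interior of the realized triangle. -/
theorem edge_cut_analysis
    {V : Type*} [Fintype V] [DecidableEq V] (Δ : Finset (Finset V))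
    (hΔ : IsTriangulation Δ)
    (ψ : V → EuclideanSpace ℝ (Fin 3))
    (hψ : IsPolyhedralImmersion Δ ψ)
    (a b d e f : V)
    (hedge : ({a, b} : Finset V) ∈ triEdges Δ)
    (htri : ({d, e, f} : Finset V) ∈ Δ)
    (hcond : (({a, b} : Finset V) ∩ ({d, e, f} : Finset V)).Nonempty ∨
      ({a, b, d} : Finset V) ∈ Δ ∨ ({a, b, e} : Finset V) ∈ Δ ∨
      ({a, b, f} : Finset V) ∈ Δ) :
    segment ℝ (ψ a) (ψ b) ∩
      intrinsicInterior ℝ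
        (convexHull ℝ ({ψ d, ψ e, ψ f} : Set (EuclideanSpace ℝ (Fin 3)))) = ∅ := by
  obtain ⟨hab, -⟩ := mem_triEdges.1 hedge
  obtain ⟨T, hT, habT, hmeet⟩ := exists_triangle_superset_edge_inter_nonempty hedge hcond
  refine Set.eq_empty_of_forall_notMem fun p ⟨hpab, hpdef⟩ => ?_
  have hpedge : p ∈ convexHull ℝ (ψ '' ({a, b} : Finset V)) := by
    simpa [image_insert_eq, convexHull_pair] using hpab
  have hpface : p ∈ convexHull ℝ (ψ '' (T ∩ {d, e, f} : Finset V)) := by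
    rw [← hψ.2 T hT _ htri hmeet]
    exact ⟨convexHull_mono (image_mono (by exact_mod_cast habT)) hpedge,
      by simpa [image_insert_eq] using intrinsicInterior_subset hpdef⟩
  have hcard : #T ≤ #{d, e, f} := (hΔ.card3 T hT).trans_le (hΔ.card3 _ htri).ge
  rcases inter_ssubset_or_ssubset_of_card habT (by rw [hab, hΔ.card3 _ htri]; norm_num) hcard
    with hS | hS
  · exact Set.disjoint_left.1 (hψ.disjoint_convexHull_image_intrinsicInterior htri hS) hpface hpdef
  · exact Set.disjoint_left.1 (hψ.disjoint_convexHull_image_intrinsicInterior htri hS) hpedge hpdef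
end
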